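/- arXiv:1703.00053 — 3 statements merged into one kernel-verified Lean document; each statement's English description precedes it below -/
import Mathlib

section
/- If transition system A refines transition system B (with label-preserving matching), and A terminates from its initial state with finite trace t, then B also produces a run with trace t from its initial state; in particular any finite trace of A is a trace of B. -/
/-- A labelled transition system over a monoid of labels `L`.
    The silent label ε is the monoid unit `1`. -/
structure LTS (σ : Type*) (L : Type*) [Monoid L] where
  step : σ → L → σ → Prop
  init : σ
  final : σ → Prop

variable {σA σB σC : Type*} {L : Type*} [Monoid L]

/-- `StepsN A n s l s'`: `n` steps from `s` to `s'` with accumulated label `l`. -/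
inductive StepsN (A : LTS σA L) : ℕ → σA → L → σA → Prop
  | refl (s : σA) : StepsN A 0 s 1 s
  | tail {n : ℕ} {s s' s'' : σA} {l l' : L} :
      A.step s l s' → StepsN A n s' l' s'' → StepsN A (n + 1) s (l * l') s''

/-- Zero or more silent steps. -/
def SilentStar (A : LTS σA L) (s s' : σA) : Prop := ∃ n, StepsN A n s 1 s'

/-- `s ⇓_ε s'` : silent convergence to a final state. -/
def Converges (A : LTS σA L) (s s' : σA) : Prop := SilentStar A s s' ∧ A.final s'

/-- A state is reachable from the initial state. -/
def Reachable (A : LTS σA L) (s : σA) : Prop := ∃ n l, StepsN A n A.init l s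

/-- A state is unstuck if it is final or can take a step. -/
def Unstuck (A : LTS σA L) (s : σA) : Prop := A.final s ∨ ∃ l s', A.step s l s'

/-- Safety: every reachable state is unstuck. -/
def Safe (A : LTS σA L) : Prop := ∀ s, Reachable A s → Unstuck A s

/-- Determinism: reachable final states are stuck, and steps from reachable
    states are unique (same label and target). -/
def Deterministic (A : LTS σA L) : Prop :=
  ∀ s, Reachable A s →
    (A.final s → ∀ l s', ¬ A.step s l s') ∧
    (∀ l₁ s₁ l₂ s₂, A.step s l₁ s₁ → A.step s l₂ s₂ → l₁ = l₂ ∧ s₁ = s₂)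

/-- `A` refines `B` by relation `R`. -/
def Refines (A : LTS σA L) (B : LTS σB L) (R : σA → σB → Prop) : Prop :=
  ∃ μ : σA → σB → ℕ,
    R A.init B.init ∧
    (∀ a b, R a b → ∀ l a', A.step a l a' →
      ∃ n b', StepsN B n b l b' ∧ R a' b' ∧ (n = 0 → μ a' b < μ a b)) ∧
    (∀ a b, R a b → A.final a → ∃ b', Converges B b b' ∧ R a b')

/-- `A` quasi-refines `B` by relation `R`: after each matched step, `A` may take
    additional silent steps before the relation is re-established. -/
def QuasiRefines (A : LTS σA L) (B : LTS σB L) (R : σA → σB → Prop) : Prop :=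
  ∃ μ : σA → σB → ℕ,
    R A.init B.init ∧
    (∀ a b, R a b → ∀ l a', A.step a l a' →
      ∃ a'' n b', SilentStar A a' a'' ∧ StepsN B n b l b' ∧ R a'' b' ∧
        (n = 0 → μ a' b < μ a b)) ∧
    (∀ a b, R a b → A.final a → ∃ b', Converges B b b' ∧ R a b')


theorem StepsN.append {A : LTS σA L} {n m : ℕ} {s s' s'' : σA} {l l' : L}
    (h1 : StepsN A n s l s') (h2 : StepsN A m s' l' s'') :
    StepsN A (n + m) s (l * l') s'' := by
  induction h1 with
  | refl s => simpa using h2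
  | tail hstep _ ih =>
    rw [mul_assoc, Nat.succ_add]
    exact StepsN.tail hstep (ih h2)

theorem sim_run {A : LTS σA L} {B : LTS σB L} {R : σA → σB → Prop}
    (hstep : ∀ a b, R a b → ∀ l a', A.step a l a' →
      ∃ n b', StepsN B n b l b' ∧ R a' b')
    (hfin : ∀ a b, R a b → A.final a → ∃ b', Converges B b b' ∧ R a b')
    {n : ℕ} {a s : σA} {t : L} (hrun : StepsN A n a t s) (hf : A.final s) :
    ∀ b, R a b → ∃ m b', StepsN B m b t b' := by
  induction hrun with
  | refl s =>
    intro b hR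
    obtain ⟨b', ⟨⟨m, hm⟩, _⟩, _⟩ := hfin _ _ hR hf
    exact ⟨m, b', hm⟩
  | tail ha _ ih =>
    intro b hR
    obtain ⟨m1, b1, hB1, hR1⟩ := hstep _ _ hR _ _ ha
    obtain ⟨m2, b2, hB2⟩ := ih hf _ hR1
    exact ⟨m1 + m2, b2, hB1.append hB2⟩

/-- if `A` refines `B` and `A` terminates from its initial state
    with finite trace `t`, then `B` also produces a run with trace `t` from its
    initial state: any finite trace of `A` is a trace of `B`. -/
theorem refines_trace_inclusion (A : LTS σA L) (B : LTS σB L) (R : σA → σB → Prop)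
    (h : Refines A B R) (t : L)
    (hterm : ∃ n s, StepsN A n A.init t s ∧ A.final s) :
    ∃ m s', StepsN B m B.init t s' := by
  obtain ⟨μ, hinit, hstep, hfin⟩ := h
  obtain ⟨n, s, hrun, hf⟩ := hterm
  exact sim_run (fun a b hR l a' ha => by
      obtain ⟨n, b', h1, h2, _⟩ := hstep a b hR l a' ha
      exact ⟨n, b', h1, h2⟩) hfin hrun hf _ hinit
end

section
/- Uniqueness after normalization in GF(2^130 − 5): for a 5-limb representation (ℓ₀,…,ℓ₄) with each ℓᵢ < 2^26, let m be the all-ones 26-bit mask (2^26 − 1) if ℓ₄ = ℓ₃ = ℓ₂ = ℓ₁ = 2^26 − 1 and ℓ₀ ≥ 2^26 − 5, and 0 otherwise; then subtracting (m AND (2^26 − 5)) from ℓ₀ and (m AND ℓᵢ) from ℓᵢ for i = 1..4 yields limbs ℓ'ᵢ < 2^26 whose evaluation eval' = Σ ℓ'ᵢ · 2^{26i} satisfies eval' = eval mod (2^130 − 5) and eval' < 2^130 − 5. -/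
/-!
Compact limbs evaluate below `2 ^ 130 < 2 * p`, so reducing modulo `p` subtracts `p` at most once,
and it does so exactly when the evaluation is at least `p`, i.e. exactly under the masking condition.
In that case the mask is all ones: the subtraction clears `ℓ₁, …, ℓ₄` and takes `2 ^ 26 - 5` off
`ℓ₀`, which removes exactly `p`. Otherwise the mask is `0` and the limbs are left unchanged.
-/

theorem Nat.mod_eq_sub_of_le_of_lt_two_mul {a p : ℕ} (hp : p ≤ a) (ha : a < 2 * p) :
    a % p = a - p := by
  rw [Nat.mod_eq_sub_mod hp, Nat.mod_eq_of_lt (by omega)]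

theorem Nat.two_pow_sub_one_land_of_lt {n x : ℕ} (hx : x < 2 ^ n) : (2 ^ n - 1) &&& x = x := by
  rw [Nat.land_comm, Nat.and_two_pow_sub_one_of_lt_two_pow hx]

theorem poly1305_prime_le_eval_iff {l0 l1 l2 l3 l4 : ℕ}
    (h0 : l0 < 2 ^ 26) (h1 : l1 < 2 ^ 26) (h2 : l2 < 2 ^ 26) (h3 : l3 < 2 ^ 26) (h4 : l4 < 2 ^ 26) :
    2 ^ 130 - 5 ≤ l0 + l1 * 2 ^ 26 + l2 * 2 ^ 52 + l3 * 2 ^ 78 + l4 * 2 ^ 104 ↔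
      l4 = 2 ^ 26 - 1 ∧ l3 = 2 ^ 26 - 1 ∧ l2 = 2 ^ 26 - 1 ∧ l1 = 2 ^ 26 - 1 ∧ 2 ^ 26 - 5 ≤ l0 := by
  omega

theorem poly1305_normalize
    (l0 l1 l2 l3 l4 : ℕ)
    (h0 : l0 < 2 ^ 26) (h1 : l1 < 2 ^ 26) (h2 : l2 < 2 ^ 26)
    (h3 : l3 < 2 ^ 26) (h4 : l4 < 2 ^ 26) :
    let p : ℕ := 2 ^ 130 - 5
    let m : ℕ :=
      if l4 = 2 ^ 26 - 1 ∧ l3 = 2 ^ 26 - 1 ∧ l2 = 2 ^ 26 - 1 ∧ l1 = 2 ^ 26 - 1 ∧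
          2 ^ 26 - 5 ≤ l0
      then 2 ^ 26 - 1 else 0
    let l0' := l0 - (m &&& (2 ^ 26 - 5))
    let l1' := l1 - (m &&& l1)
    let l2' := l2 - (m &&& l2)
    let l3' := l3 - (m &&& l3)
    let l4' := l4 - (m &&& l4)
    let eval := l0 + l1 * 2 ^ 26 + l2 * 2 ^ 52 + l3 * 2 ^ 78 + l4 * 2 ^ 104
    let eval' := l0' + l1' * 2 ^ 26 + l2' * 2 ^ 52 + l3' * 2 ^ 78 + l4' * 2 ^ 104
    (l0' < 2 ^ 26 ∧ l1' < 2 ^ 26 ∧ l2' < 2 ^ 26 ∧ l3' < 2 ^ 26 ∧ l4' < 2 ^ 26) ∧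
    eval' = eval % p ∧ eval' < p := by
  intro p m l0' l1' l2' l3' l4' eval eval'
  have hle_iff := poly1305_prime_le_eval_iff h0 h1 h2 h3 h4
  by_cases hc : l4 = 2 ^ 26 - 1 ∧ l3 = 2 ^ 26 - 1 ∧ l2 = 2 ^ 26 - 1 ∧ l1 = 2 ^ 26 - 1 ∧
      2 ^ 26 - 5 ≤ l0
  · have hm : m = 2 ^ 26 - 1 := if_pos hc
    have hmod : eval % p = eval - p :=
      Nat.mod_eq_sub_of_le_of_lt_two_mul (hle_iff.2 hc) (by omega)
    simp only [eval', l0', l1', l2', l3', l4', hm, Nat.two_pow_sub_one_land_of_lt h1,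
      Nat.two_pow_sub_one_land_of_lt h2, Nat.two_pow_sub_one_land_of_lt h3,
      Nat.two_pow_sub_one_land_of_lt h4,
      Nat.two_pow_sub_one_land_of_lt (show 2 ^ 26 - 5 < 2 ^ 26 by norm_num), hmod]
    omega
  · have hm : m = 0 := if_neg hc
    have hlt : eval < p := not_le.1 (mt hle_iff.1 hc)
    simp only [eval', l0', l1', l2', l3', l4', hm, Nat.zero_and, Nat.sub_zero,
      Nat.mod_eq_of_lt hlt]
    exact ⟨⟨h0, h1, h2, h3, h4⟩, rfl, hlt⟩
end

section
/- Masked equality is secret-independent equality: for 26-bit values x, y (i.e. x, y < 2^26), the specification of eq_mask — returning 2^26 − 1 if x = y and 0 otherwise — can be computed branch-free as z = NOT(fold of ORs of XOR bits), and in particular z = 2^26 − 1 ↔ x = y and z = 0 ↔ x ≠ y; furthermore for any w < 2^26, (w AND z) = w when x = y and (w AND z) = 0 when x ≠ y. -/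
/-! The OR-fold of the low 26 bits of `x ^^^ y` is `1` exactly when some bit of `x ^^^ y` is set,
i.e. (as `x ^^^ y < 2 ^ 26`) exactly when `x ≠ y`. Hence `z` is `2 ^ 26 - 1` or `0` according as
`x = y` or not, and `2 ^ 26 - 1` is the identity for `&&&` on 26-bit values. -/

theorem List.foldr_toNat_or_eq_toNat_any {α : Type*} (f : α → Bool) (l : List α) :
    l.foldr (fun a acc => (f a).toNat ||| acc) 0 = (l.any f).toNat := by
  induction l with
  | nil => rfl
  | cons a t ih =>
    rw [List.foldr_cons, List.any_cons, ih]
    cases f a <;> cases t.any f <;> rfl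

theorem Nat.any_range_testBit {n k : ℕ} (h : n < 2 ^ k) :
    (List.range k).any n.testBit = decide (n ≠ 0) := by
  rw [Bool.eq_iff_iff, List.any_eq_true, decide_eq_true_iff]
  constructor
  · rintro ⟨i, -, hi⟩ rfl
    simp at hi
  · intro hn
    obtain ⟨i, hi, -⟩ := Nat.exists_most_significant_bit hn
    have hik : i < k :=
      (Nat.pow_lt_pow_iff_right (by norm_num)).1 ((Nat.ge_two_pow_of_testBit hi).trans_lt h)
    exact ⟨i, List.mem_range.2 hik, hi⟩

theorem Nat.mul_one_sub_toNat_decide (m : ℕ) (p : Prop) [Decidable p] :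
    m * (1 - (decide p).toNat) = if p then 0 else m := by
  by_cases hp : p <;> simp [hp]

theorem eq_mask_spec (x y : ℕ) (hx : x < 2 ^ 26) (hy : y < 2 ^ 26) :
    -- branch-free: z = NOT (fold of ORs of the XOR bits)
    let z : ℕ := (2 ^ 26 - 1) *
      (1 - (List.range 26).foldr
        (fun i acc => (Nat.testBit (x ^^^ y) i).toNat ||| acc) 0)
    (z = 2 ^ 26 - 1 ↔ x = y) ∧
    (z = 0 ↔ x ≠ y) ∧
    ∀ w : ℕ, w < 2 ^ 26 →
      (x = y → w &&& z = w) ∧ (x ≠ y → w &&& z = 0) := by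
  intro z
  have hz : z = if x = y then 2 ^ 26 - 1 else 0 := by
    simp only [z, List.foldr_toNat_or_eq_toNat_any, Nat.any_range_testBit (Nat.xor_lt_two_pow hx hy),
      ne_eq, xor_eq_zero_iff, Nat.mul_one_sub_toNat_decide, ite_not]
  by_cases h : x = y
  · simp only [hz, h, if_true]
    exact ⟨by simp, by simp, fun w hw => ⟨fun _ => Nat.and_two_pow_sub_one_of_lt_two_pow hw, by simp⟩⟩
  · simp [hz, h]
end
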